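/- arXiv:0903.4047 — 9 statements merged into one kernel-verified Lean document; each statement's English description precedes it below -/
import Mathlib

section
/- The function k(x:r) = √(1−r²)/(π(1−x²)√(r²−x²)) on the interval (−r, r), with 0 < r < 1, is a probability density: ∫_{−r}^{r} k(x:r) dx = 1. -/
/-!
With `u(x) = √(1 - r²) x / (r √(1 - x²))` one has `1 - u² = (r² - x²) / (r² (1 - x²))` and
`u' = √(1 - r²) / (r (1 - x²)^(3/2))`, so `arcsin ∘ u` is an antiderivative of `π k(·:r)` on `(-r, r)`,
running from `-π/2` to `π/2`. The integrand is nonnegative, which makes the improper integral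
integrable for free and lets the fundamental theorem of calculus apply directly.
-/

open Real

open Set intervalIntegral

theorem integral_eq_sub_of_hasDerivAt_of_nonneg {f f' : ℝ → ℝ} {a b : ℝ} (hab : a ≤ b)
    (hcont : ContinuousOn f (Icc a b)) (hderiv : ∀ x ∈ Ioo a b, HasDerivAt f (f' x) x)
    (hpos : ∀ x ∈ Ioo a b, 0 ≤ f' x) : ∫ x in a..b, f' x = f b - f a :=
  integral_eq_sub_of_hasDerivAt_of_le hab hcont hderiv <|
    intervalIntegrable_deriv_of_nonneg (by rwa [uIcc_of_le hab])
      (by simpa only [min_eq_left hab, max_eq_right hab])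
      (by simpa only [min_eq_left hab, max_eq_right hab])

theorem hasDerivAt_mul_div_mul_sqrt_one_sub_sq (c : ℝ) {r x : ℝ} (hr : r ≠ 0) (hx : x ^ 2 < 1) :
    HasDerivAt (fun y ↦ c * y / (r * √(1 - y ^ 2))) (c / (r * (1 - x ^ 2) * √(1 - x ^ 2))) x := by
  have hx' : 0 < 1 - x ^ 2 := by linarith
  have hs : 0 < √(1 - x ^ 2) := sqrt_pos.2 hx'
  have hsq : √(1 - x ^ 2) ^ 2 = 1 - x ^ 2 := sq_sqrt hx'.le
  have hsqrt : HasDerivAt (fun y ↦ √(1 - y ^ 2)) (-x / √(1 - x ^ 2)) x := by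
    convert ((hasDerivAt_pow 2 x).const_sub 1).sqrt hx'.ne' using 1
    field_simp
    ring
  refine (((hasDerivAt_id x).const_mul c).div (hsqrt.const_mul r)
    (mul_ne_zero hr hs.ne')).congr_deriv ?_
  generalize √(1 - x ^ 2) = s at hs hsq ⊢
  rw [id, ← hsq]
  field_simp
  linear_combination c * hsq

noncomputable def konnoPrimitive (r x : ℝ) : ℝ :=
  arcsin (√(1 - r ^ 2) * x / (r * √(1 - x ^ 2)))

theorem konnoPrimitive_neg (r x : ℝ) : konnoPrimitive r (-x) = -konnoPrimitive r x := by
  simp only [konnoPrimitive, neg_sq, mul_neg, neg_div, arcsin_neg]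

theorem konnoPrimitive_self {r : ℝ} (hr0 : 0 < r) (hr1 : r < 1) : konnoPrimitive r r = π / 2 := by
  have hc : 0 < √(1 - r ^ 2) := sqrt_pos.2 (by nlinarith)
  rw [konnoPrimitive, mul_comm r, div_self (by positivity), arcsin_one]

theorem continuousOn_konnoPrimitive {r : ℝ} (hr0 : 0 < r) (hr1 : r < 1) :
    ContinuousOn (konnoPrimitive r) (Icc (-r) r) := by
  refine continuous_arcsin.comp_continuousOn (ContinuousOn.div (by fun_prop) (by fun_prop) ?_)
  intro x ⟨hx1, hx2⟩
  have : 0 < 1 - x ^ 2 := by nlinarith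
  positivity

theorem hasDerivAt_konnoPrimitive {r x : ℝ} (hr0 : 0 < r) (hr1 : r < 1) (hx : x ∈ Ioo (-r) r) :
    HasDerivAt (konnoPrimitive r) (√(1 - r ^ 2) / ((1 - x ^ 2) * √(r ^ 2 - x ^ 2))) x := by
  have hxr : 0 < r ^ 2 - x ^ 2 := by nlinarith [hx.1, hx.2]
  have hx1 : 0 < 1 - x ^ 2 := by nlinarith
  have hs : 0 < √(1 - x ^ 2) := sqrt_pos.2 hx1
  have ht : 0 < √(r ^ 2 - x ^ 2) := sqrt_pos.2 hxr
  have hcos : 1 - (√(1 - r ^ 2) * x / (r * √(1 - x ^ 2))) ^ 2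
      = (√(r ^ 2 - x ^ 2) / (r * √(1 - x ^ 2))) ^ 2 := by
    rw [div_pow, div_pow, mul_pow, mul_pow, sq_sqrt (by nlinarith), sq_sqrt hxr.le,
      sq_sqrt hx1.le]
    field_simp
    ring
  have hsin : |√(1 - r ^ 2) * x / (r * √(1 - x ^ 2))| < 1 := by
    rw [← sq_lt_one_iff_abs_lt_one]
    have : 0 < (√(r ^ 2 - x ^ 2) / (r * √(1 - x ^ 2))) ^ 2 := by positivity
    linarith
  obtain ⟨hsin_gt, hsin_lt⟩ := abs_lt.1 hsin
  refine ((hasDerivAt_arcsin hsin_gt.ne' hsin_lt.ne).comp x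
    (hasDerivAt_mul_div_mul_sqrt_one_sub_sq _ hr0.ne' (by linarith))).congr_deriv ?_
  rw [hcos, sqrt_sq (by positivity)]
  field_simp

theorem integral_sqrt_one_sub_sq_div_mul_sqrt {r : ℝ} (hr0 : 0 < r) (hr1 : r < 1) :
    ∫ x in (-r)..r, √(1 - r ^ 2) / ((1 - x ^ 2) * √(r ^ 2 - x ^ 2)) = π := by
  have hpos : ∀ x ∈ Ioo (-r) r, 0 ≤ √(1 - r ^ 2) / ((1 - x ^ 2) * √(r ^ 2 - x ^ 2)) := by
    intro x ⟨hx1, hx2⟩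
    have : 0 < 1 - x ^ 2 := by nlinarith
    positivity
  rw [integral_eq_sub_of_hasDerivAt_of_nonneg (by linarith) (continuousOn_konnoPrimitive hr0 hr1)
    (fun x hx ↦ hasDerivAt_konnoPrimitive hr0 hr1 hx) hpos, konnoPrimitive_neg,
    konnoPrimitive_self hr0 hr1]
  ring

theorem konno_density_integrates_to_one (r : ℝ) (hr0 : 0 < r) (hr1 : r < 1) :
    ∫ x in (-r)..r,
      Real.sqrt (1 - r^2) / (Real.pi * (1 - x^2) * Real.sqrt (r^2 - x^2)) = 1 := by
  simp only [mul_assoc, div_mul_eq_div_div_swap _ π]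
  rw [integral_div, integral_sqrt_one_sub_sq_div_mul_sqrt hr0 hr1, div_self pi_ne_zero]
end

section
/- For every m ≥ 1, the 2m-th moment of the measure μ with density k(x:r) equals 1 − √(1−r²) · Σ_{k=0}^{m−1} C(2k, k) (r²/4)^k, where C(2k,k) is the central binomial coefficient. In particular s_0 = 1. -/
/-!
Substituting `x = r sin θ` turns the density into `√(1 - r²) / (π (1 - r² sin² θ))` on
`(-π/2, π/2)`. Expanding `x^{2m} / (1 - x²) = 1 / (1 - x²) - ∑_{k<m} x^{2k}` reduces the
moment to `∫ dθ / (1 - r² sin² θ) = π / √(1 - r²)`, with antiderivative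
`arctan (√(1 - r²) tan θ) / √(1 - r²)`, and the Wallis integrals
`∫ sin^{2k} θ dθ = π C(2k, k) / 4^k`.
-/

open Real Set MeasureTheory intervalIntegral Filter Topology

theorem prod_range_odd_div_even (n : ℕ) :
    ∏ i ∈ Finset.range n, (2 * (i : ℝ) + 1) / (2 * i + 2) = n.centralBinom / 4 ^ n := by
  induction n with
  | zero => simp
  | succ n ih =>
    have h := n.succ_mul_centralBinom_succ
    rw [Finset.prod_range_succ, ih, eq_div_iff (by positivity)]
    rw [← @Nat.cast_inj ℝ] at h
    push_cast at h
    field_simp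
    linear_combination (-2 * (4:ℝ) ^ n) * h

theorem integral_sin_pow_even_neg_pi_div_two (n : ℕ) :
    ∫ θ in -(π / 2)..π / 2, sin θ ^ (2 * n) = π * n.centralBinom / 4 ^ n := by
  have hper : Function.Periodic (fun θ => sin θ ^ (2 * n)) π := fun θ => by
    simp only [sin_add_pi, Even.neg_pow (even_two_mul n)]
  have h := hper.intervalIntegral_add_eq (-(π / 2)) 0
  rw [show -(π / 2) + π = π / 2 by ring, zero_add] at h
  rw [h, integral_sin_pow_even, prod_range_odd_div_even, mul_div_assoc]

theorem hasDerivAt_arctan_mul_tan_div {a θ : ℝ} (ha : a ^ 2 < 1) (hθ : cos θ ≠ 0) :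
    HasDerivAt (fun θ => arctan (√(1 - a ^ 2) * tan θ) / √(1 - a ^ 2))
      (1 - (a * sin θ) ^ 2)⁻¹ θ := by
  set c := √(1 - a ^ 2)
  have hc : c ^ 2 = 1 - a ^ 2 := sq_sqrt (by linarith)
  have hc0 : c ≠ 0 := by positivity
  refine (((hasDerivAt_tan hθ).const_mul c).arctan.div_const c).congr_deriv ?_
  -- `(1 + c² tan² θ) cos² θ = cos² θ + c² sin² θ = 1 - a² sin² θ`
  have key : (1 + (c * tan θ) ^ 2) * cos θ ^ 2 = 1 - (a * sin θ) ^ 2 := by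
    rw [tan_eq_sin_div_cos]
    field_simp
    linear_combination sin θ ^ 2 * hc + sin_sq_add_cos_sq θ
  rw [← key]
  field_simp

theorem sq_mul_sin_lt_one {a : ℝ} (ha : a ^ 2 < 1) (θ : ℝ) : (a * sin θ) ^ 2 < 1 := by
  rw [mul_pow]
  nlinarith [sin_sq_le_one θ, sq_nonneg a]

theorem continuous_inv_one_sub_sq_mul_sin {a : ℝ} (ha : a ^ 2 < 1) :
    Continuous fun θ => (1 - (a * sin θ) ^ 2)⁻¹ :=
  (by fun_prop : Continuous fun θ => 1 - (a * sin θ) ^ 2).inv₀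
    fun θ => (sub_pos.mpr (sq_mul_sin_lt_one ha θ)).ne'

theorem integral_inv_one_sub_sq_mul_sin_sq {a : ℝ} (ha : a ^ 2 < 1) :
    ∫ θ in -(π / 2)..π / 2, (1 - (a * sin θ) ^ 2)⁻¹ = π / √(1 - a ^ 2) := by
  have hc : 0 < √(1 - a ^ 2) := sqrt_pos.mpr (by linarith)
  have hlow : Tendsto (fun θ => √(1 - a ^ 2) * tan θ) (𝓝[>] (-(π / 2))) atBot :=
    (tendsto_const_mul_atBot_of_pos hc).mpr tendsto_tan_neg_pi_div_two
  have hup : Tendsto (fun θ => √(1 - a ^ 2) * tan θ) (𝓝[<] (π / 2)) atTop :=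
    (tendsto_const_mul_atTop_of_pos hc).mpr tendsto_tan_pi_div_two
  rw [integral_eq_sub_of_hasDerivAt_of_tendsto (by linarith [pi_pos])
    (fun θ hθ => hasDerivAt_arctan_mul_tan_div ha (cos_pos_of_mem_Ioo hθ).ne')
    ((continuous_inv_one_sub_sq_mul_sin ha).intervalIntegrable _ _)
    ((tendsto_arctan_atBot.mono_right nhdsWithin_le_nhds).comp hlow |>.div_const _)
    ((tendsto_arctan_atTop.mono_right nhdsWithin_le_nhds).comp hup |>.div_const _)]
  ring

theorem integral_eq_integral_mul_cos_smul_comp_mul_sin {E : Type*} [NormedAddCommGroup E]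
    [NormedSpace ℝ E] {r : ℝ} (hr : 0 < r) (g : ℝ → E) :
    ∫ x in -r..r, g x = ∫ θ in -(π / 2)..π / 2, (r * cos θ) • g (r * sin θ) := by
  have himage : (fun θ => r * sin θ) '' Icc (-(π / 2)) (π / 2) = Icc (-r) r := by
    rw [← image_image (r * ·), bijOn_sin.image_eq, image_mul_left_Icc' hr, mul_neg_one, mul_one]
  have hsubst := integral_image_eq_integral_abs_deriv_smul measurableSet_Icc
    (fun θ _ => ((hasDerivAt_sin θ).const_mul r).hasDerivWithinAt)
    ((mul_right_injective₀ hr.ne').comp_injOn injOn_sin) g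
  rw [himage] at hsubst
  rw [integral_of_le (by linarith), integral_of_le (by linarith [pi_pos]),
    ← integral_Icc_eq_integral_Ioc, ← integral_Icc_eq_integral_Ioc, hsubst]
  refine setIntegral_congr_fun measurableSet_Icc fun θ hθ => ?_
  rw [abs_of_nonneg (mul_nonneg hr.le (cos_nonneg_of_mem_Icc hθ))]

theorem pow_mul_inv_one_sub {K : Type*} [Field K] {y : K} (hy : y ≠ 1) (m : ℕ) :
    y ^ m * (1 - y)⁻¹ = (1 - y)⁻¹ - ∑ k ∈ Finset.range m, y ^ k := by
  have h : 1 - y ≠ 0 := sub_ne_zero.mpr hy.symm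
  rw [geom_sum_eq hy]
  field_simp
  ring

noncomputable def konnoDensity (r x : ℝ) : ℝ :=
  √(1 - r ^ 2) / (π * (1 - x ^ 2) * √(r ^ 2 - x ^ 2))

theorem mul_cos_mul_konnoDensity_mul_sin {r θ : ℝ} (hr : 0 < r)
    (hθ : θ ∈ Ioo (-(π / 2)) (π / 2)) :
    r * cos θ * konnoDensity r (r * sin θ) =
      √(1 - r ^ 2) / π * (1 - (r * sin θ) ^ 2)⁻¹ := by
  have hcos : 0 < cos θ := cos_pos_of_mem_Ioo hθ
  have hsqrt : √(r ^ 2 - (r * sin θ) ^ 2) = r * cos θ := by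
    rw [← sqrt_sq (mul_pos hr hcos).le, mul_pow, mul_pow, cos_sq']
    ring_nf
  rw [konnoDensity, hsqrt]
  field_simp [hcos.ne']

theorem integral_pow_two_mul_mul_konnoDensity {r : ℝ} (hr0 : 0 < r) (hr1 : r < 1) (m : ℕ) :
    ∫ x in -r..r, x ^ (2 * m) * konnoDensity r x =
      1 - √(1 - r ^ 2) * ∑ k ∈ Finset.range m, (k.centralBinom : ℝ) * (r ^ 2 / 4) ^ k := by
  have hr2 : r ^ 2 < 1 := by nlinarith
  have hc : 0 < √(1 - r ^ 2) := sqrt_pos.mpr (by linarith)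
  calc ∫ x in -r..r, x ^ (2 * m) * konnoDensity r x
      = ∫ θ in -(π / 2)..π / 2,
          r * cos θ * ((r * sin θ) ^ (2 * m) * konnoDensity r (r * sin θ)) :=
        integral_eq_integral_mul_cos_smul_comp_mul_sin hr0 _
    _ = ∫ θ in -(π / 2)..π / 2, √(1 - r ^ 2) / π * ((1 - (r * sin θ) ^ 2)⁻¹ -
          ∑ k ∈ Finset.range m, r ^ (2 * k) * sin θ ^ (2 * k)) := by
        refine integral_congr_ae ?_
        filter_upwards [(countable_singleton (π / 2)).ae_notMem volume] with θ hθ hmem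
        rw [uIoc_of_le (by linarith [pi_pos])] at hmem
        rw [mul_left_comm, mul_cos_mul_konnoDensity_mul_sin hr0 ⟨hmem.1, hmem.2.lt_of_ne hθ⟩,
          pow_mul, mul_left_comm, pow_mul_inv_one_sub (sq_mul_sin_lt_one hr2 θ).ne]
        simp only [← pow_mul, mul_pow]
    _ = √(1 - r ^ 2) / π * (π / √(1 - r ^ 2) -
          ∑ k ∈ Finset.range m, r ^ (2 * k) * (π * k.centralBinom / 4 ^ k)) := by
        rw [intervalIntegral.integral_const_mul,
          integral_sub ((continuous_inv_one_sub_sq_mul_sin hr2).intervalIntegrable _ _)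
            (Continuous.intervalIntegrable (by fun_prop) _ _),
          integral_inv_one_sub_sq_mul_sin_sq hr2,
          integral_finsetSum fun k _ => Continuous.intervalIntegrable (by fun_prop) _ _]
        simp only [intervalIntegral.integral_const_mul, integral_sin_pow_even_neg_pi_div_two]
    _ = _ := by
        rw [mul_sub, Finset.mul_sum, Finset.mul_sum]
        congr 1
        · field_simp
        · refine Finset.sum_congr rfl fun k _ => ?_
          rw [div_pow, pow_mul]
          field_simp

theorem konno_even_moments (r : ℝ) (hr0 : 0 < r) (hr1 : r < 1) :
    (∫ x in (-r)..r,
      x ^ (0 : ℕ) *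
        (Real.sqrt (1 - r^2) / (Real.pi * (1 - x^2) * Real.sqrt (r^2 - x^2))) = 1) ∧
    ∀ m : ℕ, 1 ≤ m →
      ∫ x in (-r)..r,
        x ^ (2 * m) *
          (Real.sqrt (1 - r^2) / (Real.pi * (1 - x^2) * Real.sqrt (r^2 - x^2)))
      = 1 - Real.sqrt (1 - r^2) *
          ∑ k ∈ Finset.range m, (Nat.choose (2 * k) k : ℝ) * (r^2 / 4) ^ k :=
  ⟨by simpa [konnoDensity] using integral_pow_two_mul_mul_konnoDensity hr0 hr1 0,
    fun m _ => integral_pow_two_mul_mul_konnoDensity hr0 hr1 m⟩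
end

section
/- The generating function Σ_{m≥0} s_m(μ) z^m of the moments s_m(μ) = 1−√(1−r²)·Σ_{k=0}^{⌊m/2⌋−1} C(2k,k)(r²/4)^k for even m and 0 for odd m equals (1 − r²z² − z²√(1−r²)√(1−r²z²)) / ((1−z²)(1−r²z²)), for |z| sufficiently small. -/
/-!
Only the even moments are nonzero, so in the variable `w = z²` the series is the geometric
series minus `√(1 - r²)` times the generating function of the partial sums of
`∑ C(2k, k) (r²/4)^k wᵏ`. Partial sums multiply a generating function by `w / (1 - w)`, and
`∑ C(2k, k) xᵏ = (1 - 4x)^(-1/2)` is the binomial series of exponent `-1/2`.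
-/

open Finset

theorem Ring.succ_mul_choose_succ {R : Type*} [Field R] [CharZero R] (a : R) (k : ℕ) :
    ((k : R) + 1) * Ring.choose a (k + 1) = (a - k) * Ring.choose a k := by
  have h := Ring.descPochhammer_eq_factorial_smul_choose a (k + 1)
  rw [descPochhammer_succ_right, Polynomial.smeval_mul, Ring.descPochhammer_eq_factorial_smul_choose,
    Polynomial.smeval_sub, Polynomial.smeval_X, Polynomial.smeval_natCast] at h
  simp only [Nat.factorial_succ, nsmul_eq_mul, Nat.cast_mul, pow_one, pow_zero] at h
  apply mul_left_cancel₀ (Nat.cast_ne_zero.mpr k.factorial_ne_zero : (k.factorial : R) ≠ 0)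
  push_cast at h
  linear_combination -h

theorem Ring.choose_neg_one_half {K : Type*} [Field K] [CharZero K] (n : ℕ) :
    Ring.choose (-1 / 2 : K) n = (-1 / 4) ^ n * n.centralBinom := by
  induction n with
  | zero => simp
  | succ n ih =>
    have hrec : ((n : K) + 1) * (n + 1).centralBinom = 2 * (2 * n + 1) * n.centralBinom := by
      exact_mod_cast Nat.succ_mul_centralBinom_succ n
    apply mul_left_cancel₀ (Nat.cast_add_one_ne_zero n : (n : K) + 1 ≠ 0)
    rw [Ring.succ_mul_choose_succ, ih]
    linear_combination (-1 / 4 : K) ^ n / 4 * hrec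

theorem hasSum_centralBinom_mul_pow {x : ℝ} (hx : |4 * x| < 1) :
    HasSum (fun n ↦ (n.centralBinom : ℝ) * x ^ n) (√(1 - 4 * x))⁻¹ := by
  have hy : -(4 * x) ∈ Metric.eball (0 : ℝ) 1 := by
    rw [Metric.mem_eball, edist_zero_right, ← ofReal_norm, ENNReal.ofReal_lt_one]
    simpa using hx
  have h := (Real.one_add_rpow_hasFPowerSeriesOnBall_zero (a := -(1 / 2))).hasSum hy
  have hpos : 0 ≤ 1 - 4 * x := by linarith [le_abs_self (4 * x)]
  rw [zero_add, ← sub_eq_add_neg, Real.rpow_neg hpos, ← Real.sqrt_eq_rpow] at h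
  have hterm (n : ℕ) : binomialSeries ℝ (-(1 / 2) : ℝ) n (fun _ ↦ -(4 * x)) =
      (n.centralBinom : ℝ) * x ^ n := by
    rw [binomialSeries_apply, List.ofFn_const, List.prod_replicate, smul_eq_mul, ← neg_div,
      Ring.choose_neg_one_half, mul_right_comm, ← mul_pow, mul_comm]
    ring
  simpa only [hterm] using h

theorem hasSum_sum_range_mul_pow {a : ℕ → ℝ} {w A : ℝ} (hw : |w| < 1)
    (hA : HasSum (fun k ↦ a k * w ^ k) A) :
    HasSum (fun m ↦ (∑ k ∈ range m, a k) * w ^ m) (A * w / (1 - w)) := by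
  have hf : Summable fun k ↦ ‖a k * w ^ k‖ := summable_abs_iff.mpr hA.summable
  have hgeom : HasSum (fun l ↦ w ^ (l + 1)) (w / (1 - w)) := by
    simpa only [pow_succ', div_eq_mul_inv] using (hasSum_geometric_of_abs_lt_one hw).mul_left w
  have hg : Summable fun l ↦ ‖w ^ (l + 1)‖ := summable_abs_iff.mpr hgeom.summable
  have hterm (n : ℕ) : ∑ k ∈ range (n + 1), a k * w ^ k * w ^ (n - k + 1) =
      (∑ k ∈ range (n + 1), a k) * w ^ (n + 1) := by
    rw [sum_mul]
    refine sum_congr rfl fun k hk ↦ ?_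
    rw [mul_assoc, ← pow_add, ← add_assoc, Nat.add_sub_cancel' (mem_range_succ_iff.mp hk)]
  have hprod := hasSum_sum_range_mul_of_summable_norm hf hg
  rw [hA.tsum_eq, hgeom.tsum_eq, ← mul_div_assoc] at hprod
  simp only [hterm] at hprod
  refine (hasSum_nat_add_iff' 1).mp ?_
  simpa using hprod

theorem HasSum.of_even_of_odd_eq_zero {M : Type*} [AddCommMonoid M] [TopologicalSpace M]
    [ContinuousAdd M] {f : ℕ → M} {a : M} (h : HasSum (fun k ↦ f (2 * k)) a)
    (hodd : ∀ k, f (2 * k + 1) = 0) : HasSum f a := by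
  simpa using h.even_add_odd (m' := 0) (by simpa only [hodd] using hasSum_zero)

noncomputable def evenMoment (r : ℝ) (m : ℕ) : ℝ :=
  1 - √(1 - r ^ 2) * ∑ k ∈ range m, (k.centralBinom : ℝ) * (r ^ 2 / 4) ^ k

theorem hasSum_evenMoment_mul_pow {r w : ℝ} (hw : |w| < 1) (hrw : |r ^ 2 * w| < 1) :
    HasSum (fun m ↦ evenMoment r m * w ^ m)
      ((1 - r ^ 2 * w - w * √(1 - r ^ 2) * √(1 - r ^ 2 * w)) /
        ((1 - w) * (1 - r ^ 2 * w))) := by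
  have hbinom : HasSum (fun k ↦ (k.centralBinom : ℝ) * (r ^ 2 / 4) ^ k * w ^ k)
      (√(1 - r ^ 2 * w))⁻¹ := by
    have h4 : 4 * (r ^ 2 / 4 * w) = r ^ 2 * w := by ring
    have h := hasSum_centralBinom_mul_pow (x := r ^ 2 / 4 * w) (by rwa [h4])
    rw [h4] at h
    simpa only [mul_pow, mul_assoc] using h
  have hseries := (hasSum_geometric_of_abs_lt_one hw).sub
    ((hasSum_sum_range_mul_pow hw hbinom).mul_left √(1 - r ^ 2))
  have hterm : (fun m ↦ evenMoment r m * w ^ m) = fun m ↦ w ^ m - √(1 - r ^ 2) *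
      ((∑ k ∈ range m, (k.centralBinom : ℝ) * (r ^ 2 / 4) ^ k) * w ^ m) := by
    funext m
    rw [evenMoment]
    ring
  have hval : (1 - w)⁻¹ - √(1 - r ^ 2) * ((√(1 - r ^ 2 * w))⁻¹ * w / (1 - w)) =
      (1 - r ^ 2 * w - w * √(1 - r ^ 2) * √(1 - r ^ 2 * w)) / ((1 - w) * (1 - r ^ 2 * w)) := by
    have h1w : 1 - w ≠ 0 := by linarith [le_abs_self w]
    have hpos : 0 < 1 - r ^ 2 * w := by linarith [le_abs_self (r ^ 2 * w)]
    set a := √(1 - r ^ 2 * w) with ha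
    have hne : a ≠ 0 := (Real.sqrt_pos.mpr hpos).ne'
    rw [← Real.sq_sqrt hpos.le, ← ha]
    field_simp
  rwa [hterm, ← hval]

theorem konno_moment_generating_function_general (r : ℝ)
    (s : ℕ → ℝ)
    (hodd : ∀ m : ℕ, s (2 * m + 1) = 0)
    (h0 : s 0 = 1)
    (heven : ∀ m : ℕ, 1 ≤ m →
      s (2 * m) = 1 - Real.sqrt (1 - r^2) *
        ∑ k ∈ Finset.range m, (Nat.choose (2 * k) k : ℝ) * (r^2 / 4) ^ k) :
    ∃ ε > 0, ∀ z : ℝ, |z| < ε →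
      HasSum (fun m : ℕ => s m * z ^ m)
        ((1 - r^2 * z^2 - z^2 * Real.sqrt (1 - r^2) * Real.sqrt (1 - r^2 * z^2)) /
          ((1 - z^2) * (1 - r^2 * z^2))) := by
  have hs (m : ℕ) : s (2 * m) = evenMoment r m := by
    simp only [evenMoment, Nat.centralBinom_eq_two_mul_choose]
    rcases Nat.eq_zero_or_pos m with rfl | hm
    · simpa using h0
    · exact heven m hm
  have hpos : 0 < 1 + |r| := by positivity
  refine ⟨(1 + |r|)⁻¹, inv_pos.mpr hpos, fun z hz ↦ ?_⟩
  have hz1 : |z| < 1 := hz.trans_le (inv_le_one_of_one_le₀ (by simp))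
  have hrz : |r * z| < 1 := by
    have := mul_lt_mul_of_pos_right hz hpos
    rw [inv_mul_cancel₀ hpos.ne'] at this
    rw [abs_mul]
    nlinarith [abs_nonneg z]
  refine HasSum.of_even_of_odd_eq_zero ?_ (fun m ↦ by rw [hodd, zero_mul])
  simp only [hs, pow_mul]
  refine hasSum_evenMoment_mul_pow ?_ ?_
  · rw [abs_pow]; exact pow_lt_one₀ (abs_nonneg z) hz1 two_ne_zero
  · rw [← mul_pow, abs_pow]; exact pow_lt_one₀ (abs_nonneg _) hrz two_ne_zero

theorem konno_moment_generating_function (r : ℝ) (hr0 : 0 < r) (hr1 : r < 1)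
    (s : ℕ → ℝ)
    (hodd : ∀ m : ℕ, s (2 * m + 1) = 0)
    (h0 : s 0 = 1)
    (heven : ∀ m : ℕ, 1 ≤ m →
      s (2 * m) = 1 - Real.sqrt (1 - r^2) *
        ∑ k ∈ Finset.range m, (Nat.choose (2 * k) k : ℝ) * (r^2 / 4) ^ k) :
    ∃ ε > 0, ∀ z : ℝ, |z| < ε →
      HasSum (fun m : ℕ => s m * z ^ m)
        ((1 - r^2 * z^2 - z^2 * Real.sqrt (1 - r^2) * Real.sqrt (1 - r^2 * z^2)) /
          ((1 - z^2) * (1 - r^2 * z^2))) :=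
  konno_moment_generating_function_general r s hodd h0 heven
end

section
/- For 0 < r < 1, the Stieltjes transform of the measure μ with density k(x:r), namely G_μ(z) = ∫_{−r}^{r} k(x:r)/(z−x) dx, equals (z(z²−r²) − √(1−r²)√(z²−r²)) / ((z²−1)(z²−r²)) for real z > 1 (with the positive square root of z²−r²). -/
open Real intervalIntegral Set
open MeasureTheory (volume)

/-! Partial fractions split `((1 - x²)(z - x))⁻¹` into multiples of `(1 - x)⁻¹`, `(1 + x)⁻¹` and
`(z - x)⁻¹`, so everything reduces to `∫_{-r}^{r} ((a - x) √(r² - x²))⁻¹ dx = π / √(a² - r²)` for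
`a > r`. An antiderivative of that kernel is `-arcsin ((r² - a x) / (r (a - x))) / √(a² - r²)`:
the Möbius map inside the arcsin sends `[-r, r]` onto `[-1, 1]`, with `-r ↦ 1` and `r ↦ -1`. -/

section ArcsinAntiderivative

variable {r a : ℝ}

lemma hasDerivAt_neg_arcsin_div (hr : 0 < r) (ha : r < a) {x : ℝ} (hx : x ∈ Ioo (-r) r) :
    HasDerivAt (fun y => -arcsin ((r ^ 2 - a * y) / (r * (a - y))) / √(a ^ 2 - r ^ 2))
      ((a - x) * √(r ^ 2 - x ^ 2))⁻¹ x := by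
  obtain ⟨hx1, hx2⟩ := hx
  have hax : 0 < a - x := by linarith
  have hrx : 0 < r ^ 2 - x ^ 2 := by nlinarith
  have har : 0 < a ^ 2 - r ^ 2 := by nlinarith
  have hden : r * (a - x) ≠ 0 := by positivity
  have hne_one : (r ^ 2 - a * x) / (r * (a - x)) ≠ 1 := by
    rw [Ne, div_eq_one_iff_eq hden]
    nlinarith
  have hne_neg_one : (r ^ 2 - a * x) / (r * (a - x)) ≠ -1 := by
    rw [Ne, div_eq_iff hden]
    nlinarith
  have hinner : HasDerivAt (fun y => (r ^ 2 - a * y) / (r * (a - y)))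
      ((r ^ 2 - a ^ 2) / (r * (a - x) ^ 2)) x := by
    have hnum : HasDerivAt (fun y : ℝ => r ^ 2 - a * y) (-a) x := by
      simpa using ((hasDerivAt_id x).const_mul a).const_sub (r ^ 2)
    have hdenom : HasDerivAt (fun y : ℝ => r * (a - y)) (-r) x := by
      simpa using ((hasDerivAt_const x a).sub (hasDerivAt_id x)).const_mul r
    exact (hnum.div hdenom hden).congr_deriv (by field_simp; ring)
  have hcos : 1 - ((r ^ 2 - a * x) / (r * (a - x))) ^ 2
      = (√(a ^ 2 - r ^ 2) * √(r ^ 2 - x ^ 2) / (r * (a - x))) ^ 2 := by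
    rw [eq_comm, div_pow, mul_pow, sq_sqrt har.le, sq_sqrt hrx.le]
    field_simp
    ring
  refine (((hasDerivAt_arcsin hne_neg_one hne_one).comp x hinner).neg.div_const
    √(a ^ 2 - r ^ 2)).congr_deriv ?_
  rw [hcos, sqrt_sq (by positivity)]
  have hsq : √(a ^ 2 - r ^ 2) ^ 2 = a ^ 2 - r ^ 2 := sq_sqrt har.le
  field_simp
  linear_combination -hsq

lemma continuousOn_neg_arcsin_div (hr : 0 < r) (ha : r < a) :
    ContinuousOn (fun y => -arcsin ((r ^ 2 - a * y) / (r * (a - y))) / √(a ^ 2 - r ^ 2))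
      (Icc (-r) r) := by
  refine (continuous_arcsin.comp_continuousOn
    (ContinuousOn.div (by fun_prop) (by fun_prop) ?_)).neg.div_const _
  intro x hx
  have : 0 < a - x := by linarith [hx.2]
  positivity

lemma intervalIntegrable_inv_sub_mul_sqrt (hr : 0 < r) (ha : r < a) :
    IntervalIntegrable (fun x => ((a - x) * √(r ^ 2 - x ^ 2))⁻¹) volume (-r) r := by
  have hrr : -r ≤ r := by linarith
  refine intervalIntegrable_deriv_of_nonneg (g := fun y =>
    -arcsin ((r ^ 2 - a * y) / (r * (a - y))) / √(a ^ 2 - r ^ 2)) ?_ ?_ ?_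
  · rw [uIcc_of_le hrr]
    exact continuousOn_neg_arcsin_div hr ha
  · rw [min_eq_left hrr, max_eq_right hrr]
    exact fun x hx => hasDerivAt_neg_arcsin_div hr ha hx
  · rw [min_eq_left hrr, max_eq_right hrr]
    intro x hx
    have : 0 < a - x := by linarith [hx.2]
    positivity

lemma integral_inv_sub_mul_sqrt (hr : 0 < r) (ha : r < a) :
    ∫ x in (-r)..r, ((a - x) * √(r ^ 2 - x ^ 2))⁻¹ = π / √(a ^ 2 - r ^ 2) := by
  have hrr : -r ≤ r := by linarith
  rw [integral_eq_sub_of_hasDerivAt_of_le hrr (continuousOn_neg_arcsin_div hr ha)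
    (fun x hx => hasDerivAt_neg_arcsin_div hr ha hx) (intervalIntegrable_inv_sub_mul_sqrt hr ha)]
  have hright : (r ^ 2 - a * r) / (r * (a - r)) = -1 := by
    rw [div_eq_iff (by nlinarith)]
    ring
  have hleft : (r ^ 2 - a * -r) / (r * (a - -r)) = 1 := by
    rw [div_eq_iff (by nlinarith)]
    ring
  simp only [hright, hleft, arcsin_neg_one, arcsin_one]
  ring

lemma intervalIntegrable_inv_add_mul_sqrt (hr : 0 < r) (ha : r < a) :
    IntervalIntegrable (fun x => ((a + x) * √(r ^ 2 - x ^ 2))⁻¹) volume (-r) r := by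
  have h := (IntervalIntegrable.iff_comp_neg).mp (intervalIntegrable_inv_sub_mul_sqrt hr ha)
  simpa only [sub_neg_eq_add, neg_sq, neg_neg] using h.symm

lemma integral_inv_add_mul_sqrt (hr : 0 < r) (ha : r < a) :
    ∫ x in (-r)..r, ((a + x) * √(r ^ 2 - x ^ 2))⁻¹ = π / √(a ^ 2 - r ^ 2) := by
  have h := integral_comp_neg (a := -r) (b := r) fun x => ((a - x) * √(r ^ 2 - x ^ 2))⁻¹
  simp only [sub_neg_eq_add, neg_sq, neg_neg] at h
  rw [h, integral_inv_sub_mul_sqrt hr ha]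

end ArcsinAntiderivative

lemma div_one_sub_sq_div_sub_eq (c p t : ℝ) {x z : ℝ} (h₁ : 1 - x ≠ 0) (h₂ : 1 + x ≠ 0)
    (hzx : z - x ≠ 0) (hz₁ : z - 1 ≠ 0) (hz₂ : z + 1 ≠ 0) :
    c / (p * (1 - x ^ 2) * t) / (z - x) = c / p * ((2 * (z - 1))⁻¹ * ((1 - x) * t)⁻¹
      + (2 * (z + 1))⁻¹ * ((1 + x) * t)⁻¹ - (z ^ 2 - 1)⁻¹ * ((z - x) * t)⁻¹) := by
  rcases eq_or_ne p 0 with rfl | hp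
  · simp
  rcases eq_or_ne t 0 with rfl | ht
  · simp
  have : z ^ 2 - 1 ≠ 0 := by
    rw [show z ^ 2 - 1 = (z - 1) * (z + 1) by ring]; exact mul_ne_zero hz₁ hz₂
  have : 1 - x ^ 2 ≠ 0 := by
    rw [show 1 - x ^ 2 = (1 - x) * (1 + x) by ring]; exact mul_ne_zero h₁ h₂
  field_simp
  ring

theorem konno_stieltjes_transform (r : ℝ) (hr0 : 0 < r) (hr1 : r < 1)
    (z : ℝ) (hz : 1 < z) :
    ∫ x in (-r)..r,
      (Real.sqrt (1 - r^2) / (Real.pi * (1 - x^2) * Real.sqrt (r^2 - x^2))) / (z - x)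
    = (z * (z^2 - r^2) - Real.sqrt (1 - r^2) * Real.sqrt (z^2 - r^2)) /
        ((z^2 - 1) * (z^2 - r^2)) := by
  have hrz : r < z := hr1.trans hz
  have hsplit : EqOn (fun x => √(1 - r ^ 2) / (π * (1 - x ^ 2) * √(r ^ 2 - x ^ 2)) / (z - x))
      (fun x => √(1 - r ^ 2) / π * ((2 * (z - 1))⁻¹ * ((1 - x) * √(r ^ 2 - x ^ 2))⁻¹
        + (2 * (z + 1))⁻¹ * ((1 + x) * √(r ^ 2 - x ^ 2))⁻¹
        - (z ^ 2 - 1)⁻¹ * ((z - x) * √(r ^ 2 - x ^ 2))⁻¹)) (uIcc (-r) r) := by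
    intro x hx
    rw [uIcc_of_le (by linarith)] at hx
    exact div_one_sub_sq_div_sub_eq _ _ _ (by linarith [hx.2]) (by linarith [hx.1])
      (by linarith [hx.2]) (by linarith) (by linarith)
  have hi₁ := (intervalIntegrable_inv_sub_mul_sqrt hr0 hr1).const_mul (2 * (z - 1))⁻¹
  have hi₂ := (intervalIntegrable_inv_add_mul_sqrt hr0 hr1).const_mul (2 * (z + 1))⁻¹
  have hi₃ := (intervalIntegrable_inv_sub_mul_sqrt hr0 hrz).const_mul (z ^ 2 - 1)⁻¹
  rw [integral_congr hsplit, integral_const_mul, integral_sub (hi₁.add hi₂) hi₃,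
    integral_add hi₁ hi₂, integral_const_mul, integral_const_mul, integral_const_mul,
    integral_inv_sub_mul_sqrt hr0 hr1, integral_inv_add_mul_sqrt hr0 hr1,
    integral_inv_sub_mul_sqrt hr0 hrz, one_pow]
  have hzr : 0 < z ^ 2 - r ^ 2 := by nlinarith
  have : z - 1 ≠ 0 := by linarith
  have : z ^ 2 - 1 ≠ 0 := by nlinarith
  have : √(1 - r ^ 2) ≠ 0 := (sqrt_pos.2 (by nlinarith)).ne'
  have : √(z ^ 2 - r ^ 2) ≠ 0 := (sqrt_pos.2 hzr).ne'
  field_simp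
  linear_combination 2 * (z ^ 2 - 1) * √(1 - r ^ 2) * sq_sqrt hzr.le
end

section
/- Let G(z) be defined by the finite continued fraction G(z) = 1/(z − (1−s)/(z − ((s−1+r²)/2)/(z − (r²/4)A(z)))), where s = √(1−r²) and A(z) = (2z − 2√(z²−r²))/r². Then for real z > 1, G(z) = (z(z²−r²) − s√(z²−r²)) / ((z²−1)(z²−r²)). -/
/-!
Write `s = √(1 - r²)` and `w = √(z² - r²)`, so that `s² - w² = 1 - z²`. The innermost level of the
continued fraction collapses to `(z + w) / 2`, and evaluating the remaining levels from the inside out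
gives `G(z) = D / (w (z w + z² - 1 + s))` with `D = z² + z w - s + s²`. The claimed closed form equals
`(z w - s) / ((z² - 1) w)`, and the two agree by the factorization
`(z² - 1) D = (z w - s)(z w + z² - 1 + s)`, which holds as soon as `s² - w² = 1 - z²`.
-/

open Real

namespace KonnoContinuedFraction

variable {r s w z : ℝ}

lemma innermost_level (hr : r ≠ 0) :
    z - r ^ 2 / 4 * ((2 * z - 2 * w) / r ^ 2) = (z + w) / 2 := by
  field_simp
  ring

lemma second_level (hs : s ^ 2 = 1 - r ^ 2) (hzw : z + w ≠ 0) :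
    z - ((s - 1 + r ^ 2) / 2) / ((z + w) / 2) = (z ^ 2 + z * w - s + s ^ 2) / (z + w) := by
  rw [div_div_div_cancel_right₀ two_ne_zero, eq_div_iff hzw, sub_mul, div_mul_cancel₀ _ hzw]
  linear_combination -hs

lemma third_level (hs : s ^ 2 = 1 - r ^ 2) (hw : w ^ 2 = z ^ 2 - r ^ 2)
    (hD : z ^ 2 + z * w - s + s ^ 2 ≠ 0) :
    z - (1 - s) / ((z ^ 2 + z * w - s + s ^ 2) / (z + w))
      = w * (z * w + z ^ 2 - 1 + s) / (z ^ 2 + z * w - s + s ^ 2) := by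
  rw [div_div_eq_mul_div, eq_div_iff hD, sub_mul, div_mul_cancel₀ _ hD]
  linear_combination z * hs - z * hw

lemma factorization (hsw : s ^ 2 - w ^ 2 = 1 - z ^ 2) :
    (z ^ 2 - 1) * (z ^ 2 + z * w - s + s ^ 2) = (z * w - s) * (z * w + z ^ 2 - 1 + s) := by
  linear_combination z ^ 2 * hsw

lemma one_div_third_level (hs : s ^ 2 = 1 - r ^ 2) (hw : w ^ 2 = z ^ 2 - r ^ 2) (hw0 : w ≠ 0)
    (hz : z ^ 2 - 1 ≠ 0) (hN : z * w + z ^ 2 - 1 + s ≠ 0) :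
    1 / (w * (z * w + z ^ 2 - 1 + s) / (z ^ 2 + z * w - s + s ^ 2))
      = (z * (z ^ 2 - r ^ 2) - s * w) / ((z ^ 2 - 1) * (z ^ 2 - r ^ 2)) := by
  have hsw : s ^ 2 - w ^ 2 = 1 - z ^ 2 := by rw [hs, hw]; ring
  rw [one_div_div, ← hw, div_eq_div_iff (mul_ne_zero hw0 hN) (mul_ne_zero hz (pow_ne_zero 2 hw0))]
  linear_combination w ^ 2 * factorization hsw

end KonnoContinuedFraction

open KonnoContinuedFraction in
theorem konno_continued_fraction (r : ℝ) (hr0 : 0 < r) (hr1 : r < 1)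
    (z : ℝ) (hz : 1 < z) :
    (1 / (z - (1 - Real.sqrt (1 - r^2)) /
      (z - ((Real.sqrt (1 - r^2) - 1 + r^2) / 2) /
        (z - (r^2 / 4) * ((2 * z - 2 * Real.sqrt (z^2 - r^2)) / r^2)))))
    = (z * (z^2 - r^2) - Real.sqrt (1 - r^2) * Real.sqrt (z^2 - r^2)) /
        ((z^2 - 1) * (z^2 - r^2)) := by
  set s := √(1 - r ^ 2)
  set w := √(z ^ 2 - r ^ 2)
  have hs : s ^ 2 = 1 - r ^ 2 := sq_sqrt (by nlinarith)
  have hw : w ^ 2 = z ^ 2 - r ^ 2 := sq_sqrt (by nlinarith)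
  have hs0 : 0 ≤ s := sqrt_nonneg _
  have hs1 : s ≤ 1 := sqrt_le_one.mpr (by nlinarith)
  have hw0 : 0 < w := sqrt_pos.mpr (by nlinarith)
  have hz1 : 0 < z ^ 2 - 1 := by nlinarith
  have hzw : 0 < z * w := mul_pos (by linarith) hw0
  rw [innermost_level hr0.ne', second_level hs (by linarith),
    third_level hs hw (by nlinarith), one_div_third_level hs hw hw0.ne' hz1.ne' (by linarith)]
end

section
/- Let (P_n) be the monic orthogonal polynomials defined by P_0 = 1, P_1(x) = x, and xP_n = P_{n+1} + γ_{n−1} P_{n−1}, with γ_0 = 1−√(1−r²), γ_1 = √(1−r²)(1−√(1−r²))/2, γ_n = r²/4 for n ≥ 2. Then these polynomials are orthogonal with respect to the measure with density k(x:r): ∫_{−r}^{r} P_m(x) P_n(x) k(x:r) dx = 0 whenever m ≠ n. -/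
/-!
Substitute `x = r cos θ`: the density becomes `w(θ) = c / (π (1 - r² cos² θ))` on `(0, π)`,
where `c = √(1 - r²)`. With `ρ = (1 - c) / (1 + c)` one has the Poisson-kernel identity
`(1 + ρ² - 2ρ cos 2θ) w(θ) = (1 - ρ²) / π`, so the cosine moments `K k = ∫ cos (kθ) w(θ) dθ`
satisfy `K k - ρ K (k - 2) = ρ (K (k + 2) - ρ K k)` for `k ≠ 0`; as the moments are bounded
and `ρ < 1`, this forces `K k = ρ K (k - 2)` for `k ≥ 1`. The recurrence, whose first two
coefficients are tuned to `ρ`, gives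
`P (n + 2) (r cos θ) = 2 (r/2)^(n+2) (cos (n+2)θ - ρ cos nθ)`, and the moment relation makes
this orthogonal to every `cos jθ` with `|j| < n + 2`, hence to `P m (r cos θ)` for `m < n + 2`.
-/

open Real MeasureTheory Set intervalIntegral

lemma eq_zero_of_abs_le_of_eq_mul_succ {u : ℕ → ℝ} {ρ B : ℝ} (hρ : |ρ| < 1)
    (hB : ∀ n, |u n| ≤ B) (hu : ∀ n, u n = ρ * u (n + 1)) : u 0 = 0 := by
  have hpow : ∀ n, u 0 = ρ ^ n * u n := by
    intro n
    induction n with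
    | zero => simp
    | succ n ih => rw [ih, hu n, pow_succ, mul_assoc]
  have hbound : ∀ n, |u 0| ≤ |ρ| ^ n * B := fun n => by
    rw [hpow n, abs_mul, abs_pow]
    exact mul_le_mul_of_nonneg_left (hB n) (by positivity)
  have hlim : Filter.Tendsto (fun n => |ρ| ^ n * B) Filter.atTop (nhds 0) := by
    simpa using (tendsto_pow_atTop_nhds_zero_of_lt_one (abs_nonneg ρ) hρ).mul_const B
  exact abs_nonpos_iff.mp (ge_of_tendsto' hlim hbound)

lemma cos_add_two_mul_eq (a θ : ℝ) :
    cos ((a + 2) * θ) = 2 * cos θ * cos ((a + 1) * θ) - cos (a * θ) := by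
  have h₁ : (a + 2) * θ = (a + 1) * θ + θ := by ring
  have h₂ : a * θ = (a + 1) * θ - θ := by ring
  rw [h₁, h₂, cos_add, cos_sub]
  ring

namespace Konno

/-- The density `k(x:r) dx` in the variable `θ`, where `x = r cos θ`. -/
noncomputable def weight (r θ : ℝ) : ℝ := √(1 - r ^ 2) / (π * (1 - r ^ 2 * cos θ ^ 2))

noncomputable def ratio (r : ℝ) : ℝ := (1 - √(1 - r ^ 2)) / (1 + √(1 - r ^ 2))

noncomputable def cosPoly (r : ℝ) (n : ℕ) (θ : ℝ) : ℝ :=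
  2 * (r / 2) ^ (n + 2) * (cos ((n + 2) * θ) - ratio r * cos (n * θ))

noncomputable def moment (r : ℝ) (k : ℤ) : ℝ := ∫ θ in 0..π, cos (k * θ) * weight r θ

variable {r : ℝ}

lemma one_sub_sq_mul_cos_sq_pos (hr : r ^ 2 < 1) (θ : ℝ) : 0 < 1 - r ^ 2 * cos θ ^ 2 := by
  nlinarith [cos_sq_le_one θ, sq_nonneg r]

lemma weight_nonneg (hr : r ^ 2 < 1) (θ : ℝ) : 0 ≤ weight r θ := by
  have := one_sub_sq_mul_cos_sq_pos hr θ
  unfold weight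
  positivity

lemma continuous_weight (hr : r ^ 2 < 1) : Continuous (weight r) :=
  continuous_const.div (by fun_prop) fun θ =>
    (mul_pos pi_pos (one_sub_sq_mul_cos_sq_pos hr θ)).ne'

lemma intervalIntegrable_mul_weight (hr : r ^ 2 < 1) {f : ℝ → ℝ} (hf : Continuous f) :
    IntervalIntegrable (fun θ => f θ * weight r θ) volume 0 π :=
  (hf.mul (continuous_weight hr)).intervalIntegrable _ _

lemma ratio_nonneg : 0 ≤ ratio r :=
  div_nonneg (sub_nonneg.2 (sqrt_le_one.2 (by nlinarith))) (by positivity)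

lemma ratio_lt_one (hr : r ^ 2 < 1) : ratio r < 1 := by
  have hc : 0 < √(1 - r ^ 2) := sqrt_pos.2 (by linarith)
  exact (div_lt_one (by positivity)).2 (by linarith)

-- `γ 0` and `γ 0 + γ 1` in terms of `ratio r`: they make `P 2` and `P 3` fit `cosPoly`.
lemma sq_mul_one_add_ratio (hr : r ^ 2 < 1) :
    r ^ 2 * (1 + ratio r) = 2 * (1 - √(1 - r ^ 2)) := by
  have hc : 0 < √(1 - r ^ 2) := sqrt_pos.2 (by linarith)
  have hc2 : √(1 - r ^ 2) ^ 2 = 1 - r ^ 2 := sq_sqrt (by linarith)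
  unfold ratio
  field_simp
  linear_combination 2 * hc2

lemma sq_mul_three_add_ratio (hr : r ^ 2 < 1) :
    r ^ 2 * (3 + ratio r) =
      4 * ((1 - √(1 - r ^ 2)) + √(1 - r ^ 2) * (1 - √(1 - r ^ 2)) / 2) := by
  have hc : 0 < √(1 - r ^ 2) := sqrt_pos.2 (by linarith)
  have hc2 : √(1 - r ^ 2) ^ 2 = 1 - r ^ 2 := sq_sqrt (by linarith)
  unfold ratio
  field_simp
  linear_combination (8 + 4 * √(1 - r ^ 2)) * hc2

lemma poisson_mul_weight (hr : r ^ 2 < 1) (θ : ℝ) :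
    (1 + ratio r ^ 2 - 2 * ratio r * cos (2 * θ)) * weight r θ = (1 - ratio r ^ 2) / π := by
  have hc : 0 < √(1 - r ^ 2) := sqrt_pos.2 (by linarith)
  have hc2 : √(1 - r ^ 2) ^ 2 = 1 - r ^ 2 := sq_sqrt (by linarith)
  have hD := one_sub_sq_mul_cos_sq_pos hr θ
  unfold ratio weight
  rw [cos_two_mul]
  field_simp
  linear_combination 4 * √(1 - r ^ 2) * cos θ ^ 2 * hc2

lemma moment_neg (k : ℤ) : moment r (-k) = moment r k := by
  simp only [moment, Int.cast_neg, neg_mul, cos_neg]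

lemma abs_moment_le (hr : r ^ 2 < 1) (k : ℤ) : |moment r k| ≤ moment r 0 := by
  calc |moment r k| ≤ ∫ θ in 0..π, |cos (k * θ) * weight r θ| :=
        abs_integral_le_integral_abs pi_pos.le
    _ ≤ ∫ θ in 0..π, weight r θ := by
        refine integral_mono_on pi_pos.le ?_ ((continuous_weight hr).intervalIntegrable _ _)
          fun θ _ => ?_
        · exact (by fun_prop : Continuous fun θ => cos (k * θ)).mul (continuous_weight hr)
            |>.abs.intervalIntegrable _ _
        · rw [abs_mul, abs_of_nonneg (weight_nonneg hr θ)]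
          exact mul_le_of_le_one_left (weight_nonneg hr θ) (abs_cos_le_one _)
    _ = moment r 0 := by simp [moment]

lemma moment_sub_ratio_mul_moment (hr : r ^ 2 < 1) {k : ℤ} (hk : k ≠ 0) :
    moment r k - ratio r * moment r (k - 2) =
      ratio r * (moment r (k + 2) - ratio r * moment r k) := by
  have hcos : ∫ θ in 0..π, cos (k * θ) = 0 := by
    rw [integral_comp_mul_left cos (Int.cast_ne_zero.2 hk)]
    simp [sin_int_mul_pi]
  have hint : ∀ j : ℤ, IntervalIntegrable (fun θ => cos (j * θ) * weight r θ) volume 0 π :=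
    fun j => intervalIntegrable_mul_weight hr (by fun_prop)
  have hpoisson : (1 + ratio r ^ 2) * moment r k - ratio r * moment r (k + 2)
      - ratio r * moment r (k - 2) = (1 - ratio r ^ 2) / π * ∫ θ in 0..π, cos (k * θ) := by
    unfold moment
    simp only [← intervalIntegral.integral_const_mul]
    rw [← integral_sub ((hint k).const_mul _) ((hint (k + 2)).const_mul _),
      ← integral_sub (((hint k).const_mul _).sub ((hint (k + 2)).const_mul _))
        ((hint (k - 2)).const_mul _)]
    refine integral_congr fun θ _ => ?_
    have hplus : cos (((k + 2 : ℤ) : ℝ) * θ) =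
        cos (k * θ) * cos (2 * θ) - sin (k * θ) * sin (2 * θ) := by
      push_cast; rw [add_mul, cos_add]
    have hminus : cos (((k - 2 : ℤ) : ℝ) * θ) =
        cos (k * θ) * cos (2 * θ) + sin (k * θ) * sin (2 * θ) := by
      push_cast; rw [sub_mul, cos_sub]
    rw [hplus, hminus]
    linear_combination cos (k * θ) * poisson_mul_weight hr θ
  rw [hcos, mul_zero] at hpoisson
  linear_combination hpoisson

lemma moment_eq_ratio_mul (hr : r ^ 2 < 1) {k : ℤ} (hk : 1 ≤ k) :
    moment r k = ratio r * moment r (k - 2) := by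
  have hρ : |ratio r| < 1 := by
    rw [abs_of_nonneg ratio_nonneg]
    exact ratio_lt_one hr
  have hbound : ∀ a b : ℤ, |moment r a - ratio r * moment r b| ≤ 2 * moment r 0 := by
    intro a b
    have := abs_moment_le hr b
    calc |moment r a - ratio r * moment r b| ≤ |moment r a| + |ratio r| * |moment r b| := by
          rw [← abs_mul]; exact abs_sub _ _
      _ ≤ 2 * moment r 0 := by nlinarith [abs_moment_le hr a, abs_nonneg (moment r b)]
  have := eq_zero_of_abs_le_of_eq_mul_succ
    (u := fun n : ℕ => moment r (k + 2 * n) - ratio r * moment r (k + 2 * n - 2)) hρ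
    (fun n => hbound _ _) fun n => by
      convert moment_sub_ratio_mul_moment hr (k := k + 2 * n) (by omega) using 3 <;>
        push_cast <;> ring_nf
  simpa [sub_eq_zero] using this

lemma moment_one (hr : r ^ 2 < 1) : moment r 1 = 0 := by
  have h := moment_eq_ratio_mul hr le_rfl
  rw [show (1 : ℤ) - 2 = -1 by norm_num, moment_neg] at h
  have hρ := ratio_lt_one hr
  nlinarith

lemma integral_cos_mul_cos_mul_weight (hr : r ^ 2 < 1) (a b : ℤ) :
    ∫ θ in 0..π, cos (a * θ) * cos (b * θ) * weight r θ =
      (moment r (a + b) + moment r (a - b)) / 2 := by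
  unfold moment
  rw [← integral_add (intervalIntegrable_mul_weight hr (by fun_prop))
    (intervalIntegrable_mul_weight hr (by fun_prop)), ← intervalIntegral.integral_div]
  refine integral_congr fun θ _ => ?_
  push_cast
  rw [add_mul, sub_mul, cos_add, cos_sub]
  ring

lemma integral_cos_mul_cosPoly_mul_weight (hr : r ^ 2 < 1) {j : ℤ} {n : ℕ} (hj : |j| < n + 2) :
    ∫ θ in 0..π, cos (j * θ) * cosPoly r n θ * weight r θ = 0 := by
  obtain ⟨hj₁, hj₂⟩ := abs_lt.1 hj
  have hsplit : ∀ θ, cos (j * θ) * cosPoly r n θ * weight r θ =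
      2 * (r / 2) ^ (n + 2) * (cos (j * θ) * cos (((n + 2 : ℤ) : ℝ) * θ) * weight r θ)
        - 2 * (r / 2) ^ (n + 2) * ratio r * (cos (j * θ) * cos ((n : ℤ) * θ) * weight r θ) :=
    fun θ => by unfold cosPoly; push_cast; ring
  rw [integral_congr fun θ _ => hsplit θ,
    integral_sub ((intervalIntegrable_mul_weight hr (by fun_prop)).const_mul _)
      ((intervalIntegrable_mul_weight hr (by fun_prop)).const_mul _),
    intervalIntegral.integral_const_mul, intervalIntegral.integral_const_mul,
    integral_cos_mul_cos_mul_weight hr, integral_cos_mul_cos_mul_weight hr]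
  have hsum : moment r (j + (n + 2 : ℤ)) = ratio r * moment r (j + n) := by
    rw [moment_eq_ratio_mul hr (by omega), show j + (n + 2 : ℤ) - 2 = j + n by ring]
  have hdiff : moment r (j - (n + 2 : ℤ)) = ratio r * moment r (j - n) := by
    rw [← moment_neg, moment_eq_ratio_mul hr (by omega), ← moment_neg (j - n)]
    ring_nf
  linear_combination (r / 2) ^ (n + 2) * (hsum + hdiff)

lemma eval_mul_cos_of_recurrence {γ : ℕ → ℝ} {P : ℕ → ℝ → ℝ} (hr : r ^ 2 < 1)
    (hγ0 : γ 0 = 1 - √(1 - r ^ 2))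
    (hγ1 : γ 1 = √(1 - r ^ 2) * (1 - √(1 - r ^ 2)) / 2)
    (hγ : ∀ n, 2 ≤ n → γ n = r ^ 2 / 4)
    (hP0 : ∀ x, P 0 x = 1) (hP1 : ∀ x, P 1 x = x)
    (hrec : ∀ n x, P (n + 2) x = x * P (n + 1) x - γ n * P n x) (n : ℕ) (θ : ℝ) :
    P (n + 2) (r * cos θ) = cosPoly r n θ := by
  unfold cosPoly
  induction n using Nat.twoStepInduction generalizing θ with
  | zero =>
    rw [hrec, hP1, hP0, hγ0]
    simp only [CharP.cast_eq_zero, zero_add, zero_mul, cos_zero, cos_two_mul]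
    linear_combination (1 / 2) * sq_mul_one_add_ratio hr
  | one =>
    rw [hrec, hrec, hP1, hP0, hγ0, hγ1]
    simp only [Nat.cast_one, one_mul, show (1 : ℝ) + 2 = 3 by norm_num, cos_three_mul]
    linear_combination (r * cos θ / 4) * sq_mul_three_add_ratio hr
  | more n ih₀ ih₁ =>
    rw [hrec, hγ (n + 2) (by omega), ih₁, ih₀]
    have h₁ := cos_add_two_mul_eq ((n : ℝ) + 2) θ
    have h₂ := cos_add_two_mul_eq (n : ℝ) θ
    push_cast
    ring_nf at h₁ h₂ ⊢
    linear_combination (-2 * (r / 2) ^ (n + 4)) * h₁ + (2 * ratio r * (r / 2) ^ (n + 4)) * h₂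

section Orthogonality

variable {P : ℕ → ℝ → ℝ}

lemma continuous_eval_mul_cos (hP0 : ∀ x, P 0 x = 1) (hP1 : ∀ x, P 1 x = x)
    (hQ : ∀ n θ, P (n + 2) (r * cos θ) = cosPoly r n θ) (n : ℕ) :
    Continuous fun θ => P n (r * cos θ) := by
  obtain _ | _ | n := n
  · simp only [hP0]; exact continuous_const
  · simp only [hP1]; fun_prop
  · simp only [hQ, cosPoly]; fun_prop

lemma integral_cos_mul_eval_mul_cos_mul_weight (hr : r ^ 2 < 1) (hP1 : ∀ x, P 1 x = x)
    (hQ : ∀ n θ, P (n + 2) (r * cos θ) = cosPoly r n θ)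
    {j : ℤ} {n : ℕ} (hj : |j| < n) :
    ∫ θ in 0..π, cos (j * θ) * P n (r * cos θ) * weight r θ = 0 := by
  obtain _ | _ | n := n
  · exact absurd hj (by simp)
  · obtain rfl : j = 0 := by simpa using hj
    have hsplit : ∀ θ, cos (((0 : ℤ) : ℝ) * θ) * P 1 (r * cos θ) * weight r θ =
        r * (cos (((0 : ℤ) : ℝ) * θ) * cos (((1 : ℤ) : ℝ) * θ) * weight r θ) :=
      fun θ => by rw [hP1, Int.cast_one, one_mul]; ring
    rw [integral_congr fun θ _ => hsplit θ, intervalIntegral.integral_const_mul,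
      integral_cos_mul_cos_mul_weight hr]
    simp [moment_neg, moment_one hr]
  · simp_rw [hQ]
    exact integral_cos_mul_cosPoly_mul_weight hr (by exact_mod_cast hj)

lemma integral_eval_mul_cos_mul_eval_mul_cos_mul_weight (hr : r ^ 2 < 1)
    (hP0 : ∀ x, P 0 x = 1) (hP1 : ∀ x, P 1 x = x)
    (hQ : ∀ n θ, P (n + 2) (r * cos θ) = cosPoly r n θ)
    {m n : ℕ} (hmn : m < n) :
    ∫ θ in 0..π, P m (r * cos θ) * P n (r * cos θ) * weight r θ = 0 := by
  have horth : ∀ j : ℤ, |j| ≤ m →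
      ∫ θ in 0..π, cos (j * θ) * P n (r * cos θ) * weight r θ = 0 := fun j hj =>
    integral_cos_mul_eval_mul_cos_mul_weight hr hP1 hQ (hj.trans_lt (by exact_mod_cast hmn))
  obtain _ | _ | m := m
  · simpa [hP0] using horth 0 le_rfl
  · have hsplit : ∀ θ, P 1 (r * cos θ) * P n (r * cos θ) * weight r θ =
        r * (cos (((1 : ℤ) : ℝ) * θ) * P n (r * cos θ) * weight r θ) := fun θ => by
      rw [hP1, Int.cast_one, one_mul]; ring
    rw [integral_congr fun θ _ => hsplit θ, intervalIntegral.integral_const_mul,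
      horth 1 (by simp), mul_zero]
  · have hint : ∀ j : ℤ, IntervalIntegrable
        (fun θ => cos (j * θ) * P n (r * cos θ) * weight r θ) volume 0 π :=
      fun j => intervalIntegrable_mul_weight hr
        ((by fun_prop : Continuous fun θ => cos (j * θ)).mul
          (continuous_eval_mul_cos hP0 hP1 hQ n))
    have hsplit : ∀ θ, P (m + 2) (r * cos θ) * P n (r * cos θ) * weight r θ =
        2 * (r / 2) ^ (m + 2) * (cos (((m + 2 : ℕ) : ℤ) * θ) * P n (r * cos θ) * weight r θ)
          - 2 * (r / 2) ^ (m + 2) * ratio r *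
            (cos ((m : ℤ) * θ) * P n (r * cos θ) * weight r θ) := fun θ => by
      rw [hQ, cosPoly]; push_cast; ring
    rw [integral_congr fun θ _ => hsplit θ,
      integral_sub ((hint _).const_mul _) ((hint _).const_mul _),
      intervalIntegral.integral_const_mul, intervalIntegral.integral_const_mul,
      horth _ (by rw [abs_le]; omega), horth _ (by rw [abs_le]; omega)]
    ring

end Orthogonality

lemma integral_mul_density_eq_integral_mul_weight (hr0 : 0 < r) (hr : r ^ 2 < 1)
    (g : ℝ → ℝ) :
    ∫ x in (-r)..r, g x * (√(1 - r ^ 2) / (π * (1 - x ^ 2) * √(r ^ 2 - x ^ 2))) =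
      ∫ θ in 0..π, g (r * cos θ) * weight r θ := by
  have himage : (fun θ => r * cos θ) '' Ioo 0 π = Ioo (-r) r := by
    have hcos : cos '' Ioo 0 π = Ioo (-1) 1 := cosPartialHomeomorph.image_source_eq_target
    rw [← image_image (r * ·) cos, hcos, image_mul_left_Ioo hr0, mul_neg_one, mul_one]
  have hinj : InjOn (fun θ => r * cos θ) (Ioo 0 π) := fun a ha b hb h =>
    injOn_cos (Ioo_subset_Icc_self ha) (Ioo_subset_Icc_self hb) (mul_left_cancel₀ hr0.ne' h)
  rw [integral_of_le (by linarith), integral_of_le pi_pos.le,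
    integral_Ioc_eq_integral_Ioo, integral_Ioc_eq_integral_Ioo,
    ← himage, integral_image_eq_integral_abs_deriv_smul measurableSet_Ioo
      (fun θ _ => ((hasDerivAt_cos θ).const_mul r).hasDerivWithinAt) hinj]
  refine setIntegral_congr_fun measurableSet_Ioo fun θ ⟨h₀, hπ⟩ => ?_
  have hsin : 0 < sin θ := sin_pos_of_pos_of_lt_pi h₀ hπ
  have hsqrt : √(r ^ 2 - (r * cos θ) ^ 2) = r * sin θ := by
    rw [← sqrt_sq (by positivity : 0 ≤ r * sin θ)]
    congr 1
    linear_combination -r ^ 2 * sin_sq_add_cos_sq θ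
  have hD := one_sub_sq_mul_cos_sq_pos hr θ
  rw [smul_eq_mul, hsqrt, abs_of_neg (by nlinarith), weight]
  field_simp

end Konno

theorem konno_orthogonal_polynomials (r : ℝ) (hr0 : 0 < r) (hr1 : r < 1)
    (γ : ℕ → ℝ)
    (hγ0 : γ 0 = 1 - Real.sqrt (1 - r^2))
    (hγ1 : γ 1 = Real.sqrt (1 - r^2) * (1 - Real.sqrt (1 - r^2)) / 2)
    (hγ : ∀ n, 2 ≤ n → γ n = r^2 / 4)
    (P : ℕ → ℝ → ℝ)
    (hP0 : ∀ x, P 0 x = 1)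
    (hP1 : ∀ x, P 1 x = x)
    (hrec : ∀ n x, P (n + 2) x = x * P (n + 1) x - γ n * P n x) :
    ∀ m n : ℕ, m ≠ n →
      ∫ x in (-r)..r,
        P m x * P n x *
          (Real.sqrt (1 - r^2) / (Real.pi * (1 - x^2) * Real.sqrt (r^2 - x^2))) = 0 := by
  have hr : r ^ 2 < 1 := by nlinarith
  have hQ := Konno.eval_mul_cos_of_recurrence hr hγ0 hγ1 hγ hP0 hP1 hrec
  have horth : ∀ m n : ℕ, m < n → ∫ x in (-r)..r, P m x * P n x *
      (Real.sqrt (1 - r^2) / (Real.pi * (1 - x^2) * Real.sqrt (r^2 - x^2))) = 0 :=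
    fun m n hmn => by
      rw [Konno.integral_mul_density_eq_integral_mul_weight hr0 hr fun x => P m x * P n x]
      exact Konno.integral_eval_mul_cos_mul_eval_mul_cos_mul_weight hr hP0 hP1 hQ hmn
  intro m n hmn
  rcases hmn.lt_or_gt with hlt | hgt
  · exact horth m n hlt
  · simpa only [mul_comm (P m _)] using horth n m hgt
end

section
/- Let P_n be the monic polynomials from the recurrence xP_n = P_{n+1} + γ_{n−1}P_{n−1} with γ_0 = 1−√(1−r²), γ_1 = √(1−r²)(1−√(1−r²))/2, γ_n = r²/4 for n ≥ 2. Then the formal power series Q(x,z) = Σ_{n≥0} P_n(x) z^n satisfies (4 − 4xz + r²z²) Q(x,z) = 4 + (r² − 4 + 4√(1−r²)) z² + (2 − 2√(1−r²) − r²) x z³. -/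
/-! Multiplying `Q = ∑ Pₙ zⁿ` by `4 - 4xz + r²z²` gives, in degree `n + 2`, the coefficient
`4Pₙ₊₂ - 4xPₙ₊₁ + r²Pₙ = (r² - 4γₙ)Pₙ`, which vanishes for `n ≥ 2`; so the product is a cubic
polynomial, and its four coefficients are read off from `P₀, …, P₃`. -/

open Real PowerSeries

namespace PowerSeries

variable {R : Type*} [CommRing R] (a b c : R) (f : R⟦X⟧)

theorem coeff_zero_quadratic_mul :
    coeff 0 ((C a + C b * X + C c * X ^ 2) * f) = a * coeff 0 f := by
  simp [add_mul, mul_assoc]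

theorem coeff_one_quadratic_mul :
    coeff 1 ((C a + C b * X + C c * X ^ 2) * f) = a * coeff 1 f + b * coeff 0 f := by
  simp [add_mul, mul_assoc, coeff_X_pow_mul', coeff_succ_X_mul]

theorem coeff_add_two_quadratic_mul (n : ℕ) :
    coeff (n + 2) ((C a + C b * X + C c * X ^ 2) * f) =
      a * coeff (n + 2) f + b * coeff (n + 1) f + c * coeff n f := by
  simp [add_mul, mul_assoc, coeff_X_pow_mul', coeff_succ_X_mul]

end PowerSeries

theorem konno_polynomials_generating_function (r : ℝ) (hr0 : 0 < r) (hr1 : r < 1)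
    (γ : ℕ → ℝ)
    (hγ0 : γ 0 = 1 - Real.sqrt (1 - r^2))
    (hγ1 : γ 1 = Real.sqrt (1 - r^2) * (1 - Real.sqrt (1 - r^2)) / 2)
    (hγ : ∀ n, 2 ≤ n → γ n = r^2 / 4)
    (P : ℕ → ℝ → ℝ)
    (hP0 : ∀ x, P 0 x = 1)
    (hP1 : ∀ x, P 1 x = x)
    (hrec : ∀ n x, P (n + 2) x = x * P (n + 1) x - γ n * P n x) :
    ∀ x : ℝ,
      (PowerSeries.C (R := ℝ) 4 - PowerSeries.C (R := ℝ) (4 * x) * PowerSeries.X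
          + PowerSeries.C (R := ℝ) (r^2) * PowerSeries.X ^ 2)
        * PowerSeries.mk (fun n => P n x)
      = PowerSeries.C (R := ℝ) 4
        + PowerSeries.C (R := ℝ) (r^2 - 4 + 4 * Real.sqrt (1 - r^2)) * PowerSeries.X ^ 2
        + PowerSeries.C (R := ℝ) ((2 - 2 * Real.sqrt (1 - r^2) - r^2) * x) * PowerSeries.X ^ 3 := by
  intro x
  have hs : √(1 - r ^ 2) ^ 2 = 1 - r ^ 2 := sq_sqrt (by nlinarith)
  have hP2 : P 2 x = x ^ 2 - (1 - √(1 - r ^ 2)) := by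
    rw [hrec, hγ0, hP0, hP1]
    ring
  rw [sub_eq_add_neg (C 4), ← neg_mul, ← map_neg]
  ext n
  rw [map_add, map_add, coeff_C, coeff_C_mul_X_pow, coeff_C_mul_X_pow]
  rcases n with _ | _ | n
  · rw [coeff_zero_quadratic_mul]
    simp [hP0]
  · rw [coeff_one_quadratic_mul]
    simp [hP0, hP1]
  rw [coeff_add_two_quadratic_mul]
  rcases n with _ | _ | n
  · simp only [coeff_mk, hP0, hP1, hP2, Nat.reduceAdd, OfNat.ofNat_ne_zero, ↓reduceIte,
      Nat.reduceEqDiff, add_zero]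
    ring
  · simp only [coeff_mk, hrec 1, hγ1, hP1, hP2, Nat.reduceAdd, OfNat.ofNat_ne_zero, ↓reduceIte,
      Nat.succ_ne_self, add_zero]
    linear_combination 2 * x * hs
  · simp only [coeff_mk, hrec (n + 2), hγ (n + 2) (by omega), Nat.add_eq_zero_iff, one_ne_zero,
      and_false, ↓reduceIte, Nat.reduceEqDiff, add_zero]
    ring
end

section
/- For 0 < r < 1, c ∈ [−1/r, 1/r], and |z| sufficiently small real, the moment generating function of μ(r,c), M(z) = Σ_{n≥0} s_n(μ(r,c)) z^n, equals ((1−r²z²)(1+cz) − (z+c)z√(1−r²)√(1−r²z²)) / ((1−z²)(1−r²z²)). -/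
/-!
Expanding `(1 - z x)⁻¹` as a geometric series and exchanging sum and integral (dominated
convergence: the density is integrable and `|z x| ≤ |z| r < 1`) turns the series into
`∫ (1 - z x)⁻¹ dμ(r,c)`. Partial fractions write `(1 + c x) / ((1 - z x) (1 - x²))` as a
combination of `1 / (1 - t x)` for `t = z, 1, -1`, and
`∫_{-r}^{r} dx / ((1 - t x) √(r² - x²)) = π / √(1 - t² r²)` follows from an explicit
arctangent primitive.
-/

open Real MeasureTheory

theorem one_sub_mul_pos_of_abs_le {r t x : ℝ} (ht : |t| * r < 1) (hx : |x| ≤ r) :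
    0 < 1 - t * x := by
  have : |t * x| < 1 := by
    rw [abs_mul]; exact (mul_le_mul_of_nonneg_left hx (abs_nonneg t)).trans_lt ht
  linarith [le_abs_self (t * x)]

noncomputable def arcsineKernel (r t x : ℝ) : ℝ := ((1 - t * x) * √(r ^ 2 - x ^ 2))⁻¹

/-- `x / (r + √(r² - x²)) = tan (θ / 2)` for `x = r sin θ` (Weierstrass substitution). -/
noncomputable def arcsineKernelPrimitive (r t x : ℝ) : ℝ :=
  2 / √(1 - t ^ 2 * r ^ 2) *
    arctan ((x / (r + √(r ^ 2 - x ^ 2)) - t * r) / √(1 - t ^ 2 * r ^ 2))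

theorem continuous_arcsineKernelPrimitive {r : ℝ} (hr : 0 < r) (t : ℝ) :
    Continuous (arcsineKernelPrimitive r t) := by
  unfold arcsineKernelPrimitive
  refine continuous_const.mul (continuous_arctan.comp ?_)
  refine ((continuous_id.div (by fun_prop) fun x => ?_).sub continuous_const).div_const _
  positivity

theorem hasDerivAt_arcsineKernelPrimitive {r t x : ℝ} (ht : |t| * r < 1)
    (hx : x ∈ Set.Ioo (-r) r) :
    HasDerivAt (arcsineKernelPrimitive r t) (arcsineKernel r t x) x := by
  obtain ⟨hx₁, hx₂⟩ := hx
  have hr : 0 < r := by linarith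
  have htx : 0 < 1 - t * x := one_sub_mul_pos_of_abs_le ht (abs_le.mpr ⟨hx₁.le, hx₂.le⟩)
  have htr : t ^ 2 * r ^ 2 < 1 := by
    have : |t * r| < 1 := by rwa [abs_mul, abs_of_pos hr]
    nlinarith [sq_abs (t * r), abs_nonneg (t * r)]
  set s := √(1 - t ^ 2 * r ^ 2)
  have hs : 0 < s := sqrt_pos.mpr (by linarith)
  have hs2 : s ^ 2 = 1 - t ^ 2 * r ^ 2 := sq_sqrt (by linarith)
  set c := √(r ^ 2 - x ^ 2)
  have hc : 0 < c := sqrt_pos.mpr (by nlinarith)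
  have hc2 : c ^ 2 = r ^ 2 - x ^ 2 := sq_sqrt (by nlinarith)
  have hsqrt : HasDerivAt (fun y => √(r ^ 2 - y ^ 2)) (-(2 * x) / (2 * c)) x := by
    refine HasDerivAt.sqrt ?_ (by nlinarith)
    simpa using (hasDerivAt_pow 2 x).const_sub (r ^ 2)
  have hu := (((hasDerivAt_id' x).div (hsqrt.const_add r) (by positivity)).sub_const
    (t * r)).div_const s
  refine ((hu.arctan).const_mul (2 / s)).congr_deriv ?_
  simp only [arcsineKernel, Pi.div_apply]
  rw [show √(r ^ 2 - x ^ 2) = c from rfl]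
  field_simp
  rw [eq_div_iff (by nlinarith)]
  linear_combination (1 - 2 * x * t) * hc2 - (r + c) ^ 2 * hs2

theorem intervalIntegrable_arcsineKernel {r t : ℝ} (hr : 0 < r) (ht : |t| * r < 1) :
    IntervalIntegrable (arcsineKernel r t) volume (-r) r := by
  have hrr : -r ≤ r := by linarith
  refine intervalIntegral.intervalIntegrable_deriv_of_nonneg
    (continuous_arcsineKernelPrimitive hr t).continuousOn (fun x hx => ?_) fun x hx => ?_
  · rw [min_eq_left hrr, max_eq_right hrr] at hx
    exact hasDerivAt_arcsineKernelPrimitive ht hx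
  · rw [min_eq_left hrr, max_eq_right hrr] at hx
    have := one_sub_mul_pos_of_abs_le ht (abs_le.mpr ⟨hx.1.le, hx.2.le⟩)
    unfold arcsineKernel
    positivity

theorem integral_arcsineKernel {r t : ℝ} (hr : 0 < r) (ht : |t| * r < 1) :
    ∫ x in (-r)..r, arcsineKernel r t x = π / √(1 - t ^ 2 * r ^ 2) := by
  rw [intervalIntegral.integral_eq_sub_of_hasDerivAt_of_le (by linarith)
    (continuous_arcsineKernelPrimitive hr t).continuousOn
    (fun x hx => hasDerivAt_arcsineKernelPrimitive ht hx) (intervalIntegrable_arcsineKernel hr ht)]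
  have htr : |t * r| < 1 := by rwa [abs_mul, abs_of_pos hr]
  obtain ⟨htr₁, htr₂⟩ := abs_lt.mp htr
  set s := √(1 - t ^ 2 * r ^ 2)
  have hs : 0 < s := sqrt_pos.mpr (by nlinarith)
  have hs2 : s ^ 2 = 1 - t ^ 2 * r ^ 2 := sq_sqrt (by nlinarith)
  have hpos : 0 < (1 - t * r) / s := div_pos (by linarith) hs
  have hinv : (1 + t * r) / s = ((1 - t * r) / s)⁻¹ := by
    rw [inv_div, div_eq_div_iff hs.ne' (by linarith)]
    linear_combination -hs2
  have hright : (r / (r + √(r ^ 2 - r ^ 2)) - t * r) / s = (1 - t * r) / s := by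
    simp [hr.ne']
  have hleft : (-r / (r + √(r ^ 2 - (-r) ^ 2)) - t * r) / s = -((1 + t * r) / s) := by
    simp [hr.ne']
    ring
  simp only [arcsineKernelPrimitive]
  rw [hright, hleft, arctan_neg, hinv, arctan_inv_of_pos hpos]
  ring

noncomputable def muDensity (r c x : ℝ) : ℝ :=
  (1 + c * x) * (√(1 - r ^ 2) / (π * (1 - x ^ 2) * √(r ^ 2 - x ^ 2)))

theorem inv_one_sub_mul_mul_muDensity {r c x z : ℝ} (hx : |x| < 1) (hz : |z| < 1) :
    (1 - z * x)⁻¹ * muDensity r c x = √(1 - r ^ 2) / π *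
      (-(z * (z + c)) / (1 - z ^ 2) * arcsineKernel r z x
        + (1 + c) / (2 * (1 - z)) * arcsineKernel r 1 x
        + (1 - c) / (2 * (1 + z)) * arcsineKernel r (-1) x) := by
  obtain ⟨hx₁, hx₂⟩ := abs_lt.mp hx
  obtain ⟨hz₁, hz₂⟩ := abs_lt.mp hz
  have hzx : 1 - z * x ≠ 0 := (one_sub_mul_pos_of_abs_le (by simpa using hz) hx.le).ne'
  have hx2 : 1 - x ^ 2 ≠ 0 := by nlinarith
  have hz2 : 1 - z ^ 2 ≠ 0 := by nlinarith
  have : 1 - z ≠ 0 := by linarith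
  have : 1 + z ≠ 0 := by linarith
  have : 1 - x ≠ 0 := by linarith
  have : 1 + x ≠ 0 := by linarith
  simp only [muDensity, arcsineKernel, one_mul, neg_one_mul, sub_neg_eq_add]
  rcases eq_or_ne √(r ^ 2 - x ^ 2) 0 with hq | hq
  · simp [hq]
  · field_simp
    ring

theorem abs_lt_one_of_mem_uIcc {r x : ℝ} (hr0 : 0 ≤ r) (hr1 : r < 1)
    (hx : x ∈ Set.uIcc (-r) r) : |x| < 1 := by
  rw [Set.uIcc_of_le (by linarith)] at hx
  exact abs_lt.mpr ⟨by linarith [hx.1], by linarith [hx.2]⟩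

theorem intervalIntegrable_inv_one_sub_mul_mul_muDensity {r z : ℝ} (c : ℝ) (hr0 : 0 < r)
    (hr1 : r < 1) (hz : |z| < 1) :
    IntervalIntegrable (fun x => (1 - z * x)⁻¹ * muDensity r c x) volume (-r) r := by
  have hk (t : ℝ) (ht : |t| ≤ 1) := intervalIntegrable_arcsineKernel hr0 (t := t) (by nlinarith)
  refine (intervalIntegrable_congr fun x hx => (inv_one_sub_mul_mul_muDensity
    (abs_lt_one_of_mem_uIcc hr0.le hr1 (Set.uIoc_subset_uIcc hx)) hz).symm).mp ?_
  exact ((((hk z hz.le).const_mul _).add ((hk 1 (by simp)).const_mul _)).add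
    ((hk (-1) (by simp)).const_mul _)).const_mul _

theorem integral_inv_one_sub_mul_mul_muDensity {r z : ℝ} (c : ℝ) (hr0 : 0 < r)
    (hr1 : r < 1) (hz : |z| < 1) :
    ∫ x in (-r)..r, (1 - z * x)⁻¹ * muDensity r c x =
      ((1 - r ^ 2 * z ^ 2) * (1 + c * z) - (z + c) * z * √(1 - r ^ 2) * √(1 - r ^ 2 * z ^ 2)) /
        ((1 - z ^ 2) * (1 - r ^ 2 * z ^ 2)) := by
  have hk (t : ℝ) (ht : |t| ≤ 1) := intervalIntegrable_arcsineKernel hr0 (t := t) (by nlinarith)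
  have hI (t : ℝ) (ht : |t| ≤ 1) := integral_arcsineKernel hr0 (t := t) (by nlinarith)
  rw [intervalIntegral.integral_congr fun x hx =>
      inv_one_sub_mul_mul_muDensity (abs_lt_one_of_mem_uIcc hr0.le hr1 hx) hz,
    intervalIntegral.integral_const_mul,
    intervalIntegral.integral_add
      (((hk z hz.le).const_mul _).add ((hk 1 (by simp)).const_mul _))
      ((hk (-1) (by simp)).const_mul _),
    intervalIntegral.integral_add ((hk z hz.le).const_mul _) ((hk 1 (by simp)).const_mul _),
    intervalIntegral.integral_const_mul, intervalIntegral.integral_const_mul,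
    intervalIntegral.integral_const_mul, hI z hz.le, hI 1 (by simp), hI (-1) (by simp)]
  obtain ⟨hz₁, hz₂⟩ := abs_lt.mp hz
  have hr2 : r ^ 2 < 1 := by nlinarith
  have hrz : 0 < 1 - r ^ 2 * z ^ 2 := by
    nlinarith [mul_le_of_le_one_right (sq_nonneg r) (show z ^ 2 ≤ 1 by nlinarith)]
  have hb2 : √(1 - r ^ 2 * z ^ 2) ^ 2 = 1 - r ^ 2 * z ^ 2 := sq_sqrt hrz.le
  have : 1 - z ≠ 0 := by linarith
  have : 1 + z ≠ 0 := by linarith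
  have : 1 - z ^ 2 ≠ 0 := by nlinarith
  have : 0 < √(1 - r ^ 2) := sqrt_pos.mpr (by linarith)
  have : 0 < √(1 - r ^ 2 * z ^ 2) := sqrt_pos.mpr hrz
  rw [show (1 : ℝ) ^ 2 * r ^ 2 = r ^ 2 by ring, show (-1 : ℝ) ^ 2 * r ^ 2 = r ^ 2 by ring,
    show z ^ 2 * r ^ 2 = r ^ 2 * z ^ 2 by ring]
  field_simp
  linear_combination 2 * √(1 - r ^ 2) * z * (z + c) * (1 - z ^ 2) * hb2

theorem hasSum_integral_pow_mul_mul_pow {w : ℝ → ℝ} {r z : ℝ} (hr : 0 ≤ r)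
    (hw : IntervalIntegrable w volume (-r) r) (hz : |z| * r < 1) :
    HasSum (fun n : ℕ => (∫ x in (-r)..r, x ^ n * w x) * z ^ n)
      (∫ x in (-r)..r, (1 - z * x)⁻¹ * w x) := by
  have hq : 0 ≤ |z| * r := by positivity
  have hx_abs : ∀ x ∈ Set.uIoc (-r) r, |x| ≤ r := fun x hx => by
    rw [Set.uIoc_of_le (by linarith)] at hx
    exact abs_le.mpr ⟨hx.1.le, hx.2⟩
  simp_rw [← intervalIntegral.integral_mul_const]
  refine intervalIntegral.hasSum_integral_of_dominated_convergence
    (fun n x => (|z| * r) ^ n * ‖w x‖)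
    (fun n => ((continuous_pow n).aestronglyMeasurable.mul hw.def'.1).mul_const _)
    (fun n => .of_forall fun x hx => ?_) (.of_forall fun x _ => ?_) ?_ (.of_forall fun x hx => ?_)
  · calc ‖x ^ n * w x * z ^ n‖ = (|z| * |x|) ^ n * ‖w x‖ := by
          simp only [norm_mul, norm_pow, Real.norm_eq_abs]; ring
      _ ≤ (|z| * r) ^ n * ‖w x‖ := by gcongr; exact hx_abs x hx
  · exact (summable_geometric_of_lt_one hq hz).mul_right _
  · simp_rw [tsum_mul_right, tsum_geometric_of_lt_one hq hz]
    exact hw.norm.const_mul _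
  · have hzx : |z * x| < 1 := by
      rw [abs_mul]; exact (mul_le_mul_of_nonneg_left (hx_abs x hx) (abs_nonneg z)).trans_lt hz
    have hgeom := (hasSum_geometric_of_abs_lt_one hzx).mul_right (w x)
    rwa [show (fun n : ℕ => (z * x) ^ n * w x) = fun n => x ^ n * w x * z ^ n from
      funext fun n => by ring] at hgeom

theorem asymmetric_moment_generating_function_general (r c : ℝ) (hr0 : 0 < r) (hr1 : r < 1) :
    ∃ ε > 0, ∀ z : ℝ, |z| < ε →
      HasSum (fun n : ℕ =>
          (∫ x in (-r)..r,
            x ^ n * ((1 + c * x) *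
              (Real.sqrt (1 - r^2) / (Real.pi * (1 - x^2) * Real.sqrt (r^2 - x^2)))))
          * z ^ n)
        (((1 - r^2 * z^2) * (1 + c * z)
            - (z + c) * z * Real.sqrt (1 - r^2) * Real.sqrt (1 - r^2 * z^2)) /
          ((1 - z^2) * (1 - r^2 * z^2))) := by
  refine ⟨1, one_pos, fun z hz => ?_⟩
  have hzr : |z| * r < 1 := by nlinarith [abs_nonneg z]
  have hdensity : IntervalIntegrable (muDensity r c) volume (-r) r := by
    simpa using intervalIntegrable_inv_one_sub_mul_mul_muDensity c hr0 hr1 (z := 0) (by simp)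
  rw [← integral_inv_one_sub_mul_mul_muDensity c hr0 hr1 hz]
  exact hasSum_integral_pow_mul_mul_pow hr0.le hdensity hzr

theorem asymmetric_moment_generating_function (r c : ℝ) (hr0 : 0 < r) (hr1 : r < 1)
    (hc : c ∈ Set.Icc (-(1/r)) (1/r)) :
    ∃ ε > 0, ∀ z : ℝ, |z| < ε →
      HasSum (fun n : ℕ =>
          (∫ x in (-r)..r,
            x ^ n * ((1 + c * x) *
              (Real.sqrt (1 - r^2) / (Real.pi * (1 - x^2) * Real.sqrt (r^2 - x^2)))))
          * z ^ n)
        (((1 - r^2 * z^2) * (1 + c * z)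
            - (z + c) * z * Real.sqrt (1 - r^2) * Real.sqrt (1 - r^2 * z^2)) /
          ((1 - z^2) * (1 - r^2 * z^2))) :=
  asymmetric_moment_generating_function_general r c hr0 hr1
end

section
/- Let s = √(1−r²), 0 < r < 1. For real z > 1, the finite continued fraction 1/(z − (1−s) − s(1−s)/(z + (1−s)/2 − (r²/4)A(z))) with A(z) = (2z − 2√(z²−r²))/r² equals G_{μ(r,1)}(z) = ((z²−r²)(z+1) − (1+z)s√(z²−r²))/((z²−1)(z²−r²)) = ((z²−r²) − s√(z²−r²))/((z−1)(z²−r²)). -/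
/-!
Write `s = √(1 - r²)` and `w = √(z² - r²)`. The tail `(r²/4) A(z) = (z - w)/2` collapses the inner
denominator to `(z + w + 1 - s)/2`, and everything else follows from the single relation
`(w - s)(w + s) = (z - 1)(z + 1)`: it turns the continued fraction into `(w - s)/((z - 1) w)`, which
is also what both closed forms of `G_{μ(r,1)}(z)` reduce to after cancelling `z + 1` and `w`.
-/

open Real

lemma jacobi_tail_eq {r z s w : ℝ} (hr : r ≠ 0) :
    z + (1 - s) / 2 - (r ^ 2 / 4) * ((2 * z - 2 * w) / r ^ 2) = (z + w + 1 - s) / 2 := by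
  field_simp
  ring

lemma one_div_continued_fraction_eq {z s w : ℝ} (hws : w ^ 2 - s ^ 2 = z ^ 2 - 1)
    (hw : w ≠ 0) (hz : z - 1 ≠ 0) (hplus : z + w + 1 - s ≠ 0) (hminus : w + z - 1 + s ≠ 0) :
    1 / (z - (1 - s) - s * (1 - s) / ((z + w + 1 - s) / 2)) = (w - s) / ((z - 1) * w) := by
  have hden : z - (1 - s) - s * (1 - s) / ((z + w + 1 - s) / 2)
      = w * (w + z - 1 + s) / (z + w + 1 - s) := by
    field_simp
    linear_combination -hws
  rw [hden, one_div_div, div_eq_div_iff (mul_ne_zero hw hminus) (mul_ne_zero hz hw)]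
  linear_combination -w * hws

lemma div_cancel_add_one_factor {z a b : ℝ} (hz : z + 1 ≠ 0) :
    (a * (z + 1) - (1 + z) * b) / ((z ^ 2 - 1) * a) = (a - b) / ((z - 1) * a) := by
  rw [show a * (z + 1) - (1 + z) * b = (z + 1) * (a - b) by ring,
    show (z ^ 2 - 1) * a = (z + 1) * ((z - 1) * a) by ring, mul_div_mul_left _ _ hz]

lemma sq_sub_mul_div_mul_sq {z s w : ℝ} (hw : w ≠ 0) :
    (w ^ 2 - s * w) / ((z - 1) * w ^ 2) = (w - s) / ((z - 1) * w) := by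
  rw [show w ^ 2 - s * w = w * (w - s) by ring,
    show (z - 1) * w ^ 2 = w * ((z - 1) * w) by ring, mul_div_mul_left _ _ hw]

theorem jacobi_coefficients_c_one (r : ℝ) (hr0 : 0 < r) (hr1 : r < 1)
    (z : ℝ) (hz : 1 < z) :
    (1 / (z - (1 - Real.sqrt (1 - r^2))
        - Real.sqrt (1 - r^2) * (1 - Real.sqrt (1 - r^2)) /
          (z + (1 - Real.sqrt (1 - r^2)) / 2
            - (r^2 / 4) * ((2 * z - 2 * Real.sqrt (z^2 - r^2)) / r^2)))
      = ((z^2 - r^2) * (z + 1)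
          - (1 + z) * Real.sqrt (1 - r^2) * Real.sqrt (z^2 - r^2)) /
          ((z^2 - 1) * (z^2 - r^2))) ∧
    (((z^2 - r^2) * (z + 1)
        - (1 + z) * Real.sqrt (1 - r^2) * Real.sqrt (z^2 - r^2)) /
        ((z^2 - 1) * (z^2 - r^2))
      = ((z^2 - r^2) - Real.sqrt (1 - r^2) * Real.sqrt (z^2 - r^2)) /
          ((z - 1) * (z^2 - r^2))) := by
  have hs2 : √(1 - r ^ 2) ^ 2 = 1 - r ^ 2 := sq_sqrt (by nlinarith)
  have hw2 : √(z ^ 2 - r ^ 2) ^ 2 = z ^ 2 - r ^ 2 := sq_sqrt (by nlinarith)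
  have hs : 0 < √(1 - r ^ 2) := sqrt_pos.mpr (by nlinarith)
  have hw : 0 < √(z ^ 2 - r ^ 2) := sqrt_pos.mpr (by nlinarith)
  set s := √(1 - r ^ 2)
  set w := √(z ^ 2 - r ^ 2)
  have hs1 : s < 1 := by nlinarith
  rw [← hw2, mul_assoc (1 + z)]
  have hclosed := div_cancel_add_one_factor (a := w ^ 2) (b := s * w) (z := z) (by linarith)
  refine ⟨?_, hclosed⟩
  rw [hclosed, sq_sub_mul_div_mul_sq hw.ne', jacobi_tail_eq hr0.ne']
  exact one_div_continued_fraction_eq (by rw [hs2, hw2]; ring) hw.ne' (by linarith)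
    (by linarith) (by linarith)
end
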